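/- arXiv:2103.15109 — 3 statements merged into one kernel-verified Lean document; each statement's English description precedes it below -/
import Mathlib

section
/- Let H be a real Hilbert space, a a bounded coercive symmetric bilinear form on H, L₁, L₂ bounded linear functionals on H whose kernels satisfy: L₁ vanishes on a closed subspace T, L₂ vanishes on the orthogonal complement of T, where orthogonality is with respect to the inner product of H. Let Ũ solve a(Ũ, V) = L₁(V) + L₂(V) for all V, let U₁ solve a(U₁, V) = L₁(V), and let U₂ solve a(U₂, V) = L₂(V). Then Ũ = 0 if and only if U₁ = 0 and U₂ = 0. -/
/-!
Coercivity makes `U ↦ a U ·` injective, so each solution vanishes exactly when its right-hand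
side does, and the theorem reduces to `L₁ + L₂ = 0 ↔ L₁ = 0 ∧ L₂ = 0`. If `L₁ + L₂ = 0`, then
`L₂ = -L₁` vanishes on both `T` and `Tᗮ`, hence on the dense subspace `T ⊔ Tᗮ`, hence everywhere.
-/

namespace ContinuousLinearMap

variable {𝕜 E : Type*} [RCLike 𝕜] [NormedAddCommGroup E] [InnerProductSpace 𝕜 E] [CompleteSpace E]
  {K : Submodule 𝕜 E}

theorem eq_zero_of_forall_mem_of_forall_mem_orthogonal {L : E →L[𝕜] 𝕜}
    (hK : ∀ v ∈ K, L v = 0) (hKperp : ∀ v ∈ Kᗮ, L v = 0) : L = 0 := by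
  have hdense : (K ⊔ Kᗮ).topologicalClosure = ⊤ := by
    rw [Submodule.topologicalClosure_eq_top_iff, ← Submodule.inf_orthogonal,
      Kᗮ.inf_orthogonal_eq_bot]
  have hker : (K ⊔ Kᗮ).topologicalClosure ≤ (L : E →ₗ[𝕜] 𝕜).ker :=
    (K ⊔ Kᗮ).topologicalClosure_minimal (sup_le hK hKperp) L.isClosed_ker
  ext v
  exact hker (hdense ▸ Submodule.mem_top)

theorem add_eq_zero_iff_of_forall_mem_of_forall_mem_orthogonal {L₁ L₂ : E →L[𝕜] 𝕜}
    (hL₁ : ∀ v ∈ K, L₁ v = 0) (hL₂ : ∀ v ∈ Kᗮ, L₂ v = 0) :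
    L₁ + L₂ = 0 ↔ L₁ = 0 ∧ L₂ = 0 := by
  refine ⟨fun hsum => ?_, fun ⟨h₁, h₂⟩ => by rw [h₁, h₂, add_zero]⟩
  have hL₂_eq : L₂ = -L₁ := eq_neg_of_add_eq_zero_right hsum
  have hL₂_zero : L₂ = 0 := by
    refine eq_zero_of_forall_mem_of_forall_mem_orthogonal (K := K) (fun v hv => ?_) hL₂
    simp [hL₂_eq, hL₁ v hv]
  exact ⟨by simpa [hL₂_zero] using hsum, hL₂_zero⟩

end ContinuousLinearMap

theorem eq_zero_iff_of_coercive_of_forall_apply_eq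
    {E : Type*} [NormedAddCommGroup E] [Module ℝ E] {a : E →ₗ[ℝ] E →ₗ[ℝ] ℝ}
    (hcoer : ∃ c : ℝ, 0 < c ∧ ∀ v : E, c * ‖v‖ ^ 2 ≤ a v v)
    {L : E →L[ℝ] ℝ} {u : E} (hu : ∀ v : E, a u v = L v) : u = 0 ↔ L = 0 := by
  obtain ⟨c, hc, hcoer⟩ := hcoer
  constructor
  · rintro rfl
    ext v
    simp [← hu v]
  · rintro rfl
    have hc_norm : c * ‖u‖ ^ 2 ≤ 0 := by simpa [hu u] using hcoer u
    have hnorm : ‖u‖ ^ 2 ≤ 0 := nonpos_of_mul_nonpos_right hc_norm hc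
    simpa using hnorm

theorem stmt3_general
    {H : Type*} [NormedAddCommGroup H] [InnerProductSpace ℝ H] [CompleteSpace H]
    (a : H →ₗ[ℝ] H →ₗ[ℝ] ℝ)
    (hcoer : ∃ c : ℝ, 0 < c ∧ ∀ v : H, c * ‖v‖ ^ 2 ≤ a v v)
    (T : Submodule ℝ H)
    (L₁ L₂ : H →L[ℝ] ℝ)
    (hL₁ : ∀ v ∈ T, L₁ v = 0)
    (hL₂ : ∀ v ∈ Tᗮ, L₂ v = 0)
    (Ut U₁ U₂ : H)
    (hUt : ∀ V : H, a Ut V = L₁ V + L₂ V)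
    (hU₁ : ∀ V : H, a U₁ V = L₁ V)
    (hU₂ : ∀ V : H, a U₂ V = L₂ V) :
    Ut = 0 ↔ (U₁ = 0 ∧ U₂ = 0) := by
  rw [eq_zero_iff_of_coercive_of_forall_apply_eq hcoer (L := L₁ + L₂) hUt,
    eq_zero_iff_of_coercive_of_forall_apply_eq hcoer hU₁,
    eq_zero_iff_of_coercive_of_forall_apply_eq hcoer hU₂]
  exact ContinuousLinearMap.add_eq_zero_iff_of_forall_mem_of_forall_mem_orthogonal hL₁ hL₂

/-- Consistency of the modified pre-shape gradient system (Theorem "Shape Regularized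
Problems"): with `L₁` vanishing on a closed subspace `T` and `L₂` vanishing on `Tᗮ`, the
Lax–Milgram solution for `L₁ + L₂` vanishes iff the solutions for `L₁` and `L₂` both vanish. -/
theorem stmt3
    {H : Type*} [NormedAddCommGroup H] [InnerProductSpace ℝ H] [CompleteSpace H]
    (a : H →ₗ[ℝ] H →ₗ[ℝ] ℝ)
    (hbdd : ∃ C : ℝ, ∀ u v : H, |a u v| ≤ C * ‖u‖ * ‖v‖)
    (hcoer : ∃ c : ℝ, 0 < c ∧ ∀ v : H, c * ‖v‖ ^ 2 ≤ a v v)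
    (hsymm : ∀ u v : H, a u v = a v u)
    (T : Submodule ℝ H) (hTc : IsClosed (T : Set H))
    (L₁ L₂ : H →L[ℝ] ℝ)
    (hL₁ : ∀ v ∈ T, L₁ v = 0)
    (hL₂ : ∀ v ∈ Tᗮ, L₂ v = 0)
    (Ut U₁ U₂ : H)
    (hUt : ∀ V : H, a Ut V = L₁ V + L₂ V)
    (hU₁ : ∀ V : H, a U₁ V = L₁ V)
    (hU₂ : ∀ V : H, a U₂ V = L₂ V) :
    Ut = 0 ↔ (U₁ = 0 ∧ U₂ = 0) :=
  stmt3_general a hcoer T L₁ L₂ hL₁ hL₂ Ut U₁ U₂ hUt hU₁ hU₂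
end

section
/- Let H be a real Hilbert space, T a closed subspace with orthogonal projection P : H → T, a a bounded coercive symmetric bilinear form on H, and L₁, L₂, L₃ bounded linear functionals such that L₁ + L₂ vanishes on T and L₃ vanishes on T^⊥. Let U solve a(U, V) = L₁(V) + L₂(V) + L₃(P(V)) for all V ∈ H, let Ũ solve a(Ũ, V) = L₁(V) + L₂(V), and let W solve a(W, V) = L₃(V) for all V ∈ T (with W ∈ T, coercivity restricted to T). Then U = 0 if and only if Ũ = 0 and W = 0. -/
/-!
If `U = 0`, the right-hand side `L₁ + L₂ + L₃ ∘ P` vanishes. On `T`, where `P` is the identity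
and `L₁ + L₂ = 0`, this gives `L₃ = 0`; on `Tᗮ`, where `P = 0`, it gives `L₁ + L₂ = 0`, hence
`L₁ + L₂ = 0` on `T ⊔ Tᗮ = H`. Then `a(Ut, Ut) = a(W, W) = 0` and coercivity finishes; the
converse runs the same way with `a(U, U)`.
-/

open LinearMap

theorem eq_zero_of_coercive {E : Type*} [NormedAddCommGroup E] [Module ℝ E]
    {a : E →ₗ[ℝ] E →ₗ[ℝ] ℝ} (hcoer : ∃ c : ℝ, 0 < c ∧ ∀ v : E, c * ‖v‖ ^ 2 ≤ a v v)
    {u : E} (hu : a u u = 0) : u = 0 := by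
  obtain ⟨c, hc, hco⟩ := hcoer
  have hsq : ‖u‖ ^ 2 ≤ 0 := nonpos_of_mul_nonpos_right (hu ▸ hco u) hc
  simpa using le_antisymm hsq (sq_nonneg _)

section Orthogonal

variable {𝕜 E F : Type*} [RCLike 𝕜] [NormedAddCommGroup E] [InnerProductSpace 𝕜 E]
  [AddCommGroup F] [Module 𝕜 F] (K : Submodule 𝕜 E) [K.HasOrthogonalProjection]

theorem LinearMap.eq_zero_of_le_ker_of_orthogonal_le_ker {f : E →ₗ[𝕜] F}
    (hK : K ≤ ker f) (hKo : Kᗮ ≤ ker f) : f = 0 :=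
  ker_eq_top.mp <| top_le_iff.mp <|
    K.sup_orthogonal_of_hasOrthogonalProjection ▸ sup_le hK hKo

theorem Submodule.eq_zero_and_le_ker_of_add_comp_orthogonalProjectionOnto
    {f g : E →ₗ[𝕜] F} (hf : K ≤ ker f)
    (h : ∀ v, f v + g (K.orthogonalProjectionOnto v) = 0) : f = 0 ∧ K ≤ ker g := by
  have hgK : K ≤ ker g := fun v hv => by
    simpa [K.orthogonalProjectionOnto_mem_subspace_eq_self ⟨v, hv⟩, mem_ker.mp (hf hv)] using h v
  have hfKo : Kᗮ ≤ ker f := fun v hv => by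
    simpa [K.orthogonalProjectionOnto_apply_of_mem_orthogonal hv] using h v
  exact ⟨eq_zero_of_le_ker_of_orthogonal_le_ker K hf hfKo, hgK⟩

end Orthogonal

theorem stmt9_general
    {H : Type*} [NormedAddCommGroup H] [InnerProductSpace ℝ H] [CompleteSpace H]
    (T : Submodule ℝ H) (hTc : IsClosed (T : Set H))
    (a : H →ₗ[ℝ] H →ₗ[ℝ] ℝ)
    (hcoer : ∃ c : ℝ, 0 < c ∧ ∀ v : H, c * ‖v‖ ^ 2 ≤ a v v)
    (L₁ L₂ L₃ : H →L[ℝ] ℝ)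
    (hL₁₂ : ∀ v ∈ T, L₁ v + L₂ v = 0)
    (U Ut W : H) (hWT : W ∈ T)
    (hU : haveI : CompleteSpace T := hTc.completeSpace_coe
      ∀ V : H, a U V = L₁ V + L₂ V + L₃ ((T.orthogonalProjectionOnto V : T) : H))
    (hUt : ∀ V : H, a Ut V = L₁ V + L₂ V)
    (hW : ∀ V ∈ T, a W V = L₃ V) :
    U = 0 ↔ (Ut = 0 ∧ W = 0) := by
  have : CompleteSpace T := hTc.completeSpace_coe
  constructor
  · rintro rfl
    obtain ⟨hL₁₂_zero, hL₃T⟩ :=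
      T.eq_zero_and_le_ker_of_add_comp_orthogonalProjectionOnto
        (f := ((L₁ + L₂ : H →L[ℝ] ℝ) : H →ₗ[ℝ] ℝ)) (g := (L₃ : H →ₗ[ℝ] ℝ))
        (fun v hv => hL₁₂ v hv) (fun V => by simpa using (hU V).symm)
    refine ⟨eq_zero_of_coercive hcoer ?_, eq_zero_of_coercive hcoer ?_⟩
    · simpa [hUt] using LinearMap.congr_fun hL₁₂_zero Ut
    · rw [hW W hWT]
      exact hL₃T hWT
  · rintro ⟨rfl, rfl⟩
    apply eq_zero_of_coercive hcoer
    rw [hU U, ← hUt U, ← hW _ (T.orthogonalProjectionOnto U).2]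
    simp

/-- Consistency of the fully regularized pre-shape gradient (Theorem "Volume and Shape
Regularized Problems"): with `L₁ + L₂` vanishing on the closed subspace `T`, `L₃` vanishing
on `Tᗮ`, `P` the orthogonal projection onto `T`, `U` the Lax–Milgram solution with
right-hand side `L₁ + L₂ + L₃ ∘ P`, `Ut` the one with right-hand side `L₁ + L₂`, and
`W ∈ T` the solution of `a(W, ·) = L₃` on `T`, one has `U = 0 ↔ (Ut = 0 ∧ W = 0)`. -/
theorem stmt9
    {H : Type*} [NormedAddCommGroup H] [InnerProductSpace ℝ H] [CompleteSpace H]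
    (T : Submodule ℝ H) (hTc : IsClosed (T : Set H))
    (a : H →ₗ[ℝ] H →ₗ[ℝ] ℝ)
    (hbdd : ∃ C : ℝ, ∀ u v : H, |a u v| ≤ C * ‖u‖ * ‖v‖)
    (hcoer : ∃ c : ℝ, 0 < c ∧ ∀ v : H, c * ‖v‖ ^ 2 ≤ a v v)
    (hsymm : ∀ u v : H, a u v = a v u)
    (L₁ L₂ L₃ : H →L[ℝ] ℝ)
    (hL₁₂ : ∀ v ∈ T, L₁ v + L₂ v = 0)
    (hL₃ : ∀ v ∈ Tᗮ, L₃ v = 0)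
    (U Ut W : H) (hWT : W ∈ T)
    (hU : haveI : CompleteSpace T := hTc.completeSpace_coe
      ∀ V : H, a U V = L₁ V + L₂ V + L₃ ((T.orthogonalProjectionOnto V : T) : H))
    (hUt : ∀ V : H, a Ut V = L₁ V + L₂ V)
    (hW : ∀ V ∈ T, a W V = L₃ V) :
    U = 0 ↔ (Ut = 0 ∧ W = 0) :=
  stmt9_general T hTc a hcoer L₁ L₂ L₃ hL₁₂ U Ut W hWT hU hUt hW
end

section
/- Let A be a real n×n symmetric positive semidefinite matrix and ε > 0. Then for any n×n matrices U (viewed through its gradient representation), the map U ↦ (ε² + ⟨U, U⟩_F)^{p/2 − 1} · U, for p ≥ 2, is monotone: for all matrices X, Y, ⟨(ε² + ‖X‖_F²)^{p/2−1} X − (ε² + ‖Y‖_F²)^{p/2−1} Y, X − Y⟩_F ≥ 0. -/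
/-!
Flatten the matrices into Euclidean space, where the Frobenius inner product is the standard one.
For a radial map `x ↦ φ(‖x‖²) x` with `φ ≥ 0`, Cauchy–Schwarz gives
`⟪a x - b y, x - y⟫ ≥ (‖x‖ - ‖y‖)(a ‖x‖ - b ‖y‖)` with `a = φ(‖x‖²)`, `b = φ(‖y‖²)`, and the right
side is nonnegative as soon as `a - b` has the sign of `‖x‖ - ‖y‖`, i.e. when `φ` is monotone.
For `p ≥ 2` the function `t ↦ (ε² + t)^(p/2 - 1)` is monotone on `[0, ∞)`.
-/

open RealInnerProductSpace

section InnerProductSpace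

variable {E : Type*} [NormedAddCommGroup E] [InnerProductSpace ℝ E]

theorem mul_sub_mul_norm_le_inner_smul_sub_smul (x y : E) {a b : ℝ} (hab : 0 ≤ a + b) :
    (‖x‖ - ‖y‖) * (a * ‖x‖ - b * ‖y‖) ≤ ⟪a • x - b • y, x - y⟫ := by
  have hexpand : ⟪a • x - b • y, x - y⟫ = a * ‖x‖ ^ 2 + b * ‖y‖ ^ 2 - (a + b) * ⟪x, y⟫ := by
    simp only [inner_sub_left, inner_sub_right, real_inner_smul_left, real_inner_self_eq_norm_sq,
      real_inner_comm x y]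
    ring
  rw [hexpand]
  nlinarith [mul_le_mul_of_nonneg_left (real_inner_le_norm x y) hab]

theorem inner_smul_sub_smul_sub_nonneg (x y : E) {a b : ℝ} (ha : 0 ≤ a) (hb : 0 ≤ b)
    (hab : 0 ≤ (a - b) * (‖x‖ - ‖y‖)) : 0 ≤ ⟪a • x - b • y, x - y⟫ := by
  refine le_trans ?_ (mul_sub_mul_norm_le_inner_smul_sub_smul x y (add_nonneg ha hb))
  -- `(s - t)(a s - b t) = a (s - t)² + (a - b) t (s - t)`
  nlinarith [mul_nonneg ha (sq_nonneg (‖x‖ - ‖y‖)), mul_nonneg hab (norm_nonneg y)]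

theorem inner_radial_smul_sub_nonneg {φ : ℝ → ℝ} (hφ : MonotoneOn φ (Set.Ici 0))
    (hφ_nonneg : ∀ t, 0 ≤ t → 0 ≤ φ t) (x y : E) :
    0 ≤ ⟪φ (‖x‖ ^ 2) • x - φ (‖y‖ ^ 2) • y, x - y⟫ := by
  refine inner_smul_sub_smul_sub_nonneg x y (hφ_nonneg _ (sq_nonneg _))
    (hφ_nonneg _ (sq_nonneg _)) ?_
  have hmem : ∀ z : E, ‖z‖ ^ 2 ∈ Set.Ici (0 : ℝ) := fun z => sq_nonneg ‖z‖
  rcases le_total ‖x‖ ‖y‖ with h | h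
  · have := hφ (hmem x) (hmem y) (pow_le_pow_left₀ (norm_nonneg x) h 2)
    exact mul_nonneg_of_nonpos_of_nonpos (by linarith) (by linarith)
  · have := hφ (hmem y) (hmem x) (pow_le_pow_left₀ (norm_nonneg y) h 2)
    exact mul_nonneg (by linarith) (by linarith)

end InnerProductSpace

theorem monotoneOn_add_rpow {c q : ℝ} (hc : 0 ≤ c) (hq : 0 ≤ q) :
    MonotoneOn (fun t : ℝ => (c + t) ^ q) (Set.Ici 0) := fun _ hs _ _ hst =>
  Real.rpow_le_rpow (add_nonneg hc hs) (by linarith) hq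

theorem stmt17_general {n : ℕ}
    (ε : ℝ) (p : ℝ) (hp : 2 ≤ p) :
    ∀ X Y : Matrix (Fin n) (Fin n) ℝ,
      0 ≤ ∑ i : Fin n, ∑ j : Fin n,
        ((ε ^ 2 + ∑ k : Fin n, ∑ l : Fin n, (X k l) ^ 2) ^ (p / 2 - 1) * X i j -
            (ε ^ 2 + ∑ k : Fin n, ∑ l : Fin n, (Y k l) ^ 2) ^ (p / 2 - 1) * Y i j) *
          (X i j - Y i j) := by
  intro X Y
  have hmono := monotoneOn_add_rpow (sq_nonneg ε) (by linarith : 0 ≤ p / 2 - 1)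
  have hnonneg : ∀ t : ℝ, 0 ≤ t → 0 ≤ (ε ^ 2 + t) ^ (p / 2 - 1) :=
    fun t ht => Real.rpow_nonneg (by positivity) _
  have key := inner_radial_smul_sub_nonneg hmono hnonneg
    (WithLp.toLp 2 (fun q : Fin n × Fin n => X q.1 q.2) : EuclideanSpace ℝ (Fin n × Fin n))
    (WithLp.toLp 2 (fun q : Fin n × Fin n => Y q.1 q.2))
  simpa [EuclideanSpace.real_norm_sq_eq, PiLp.inner_apply, Fintype.sum_prod_type, mul_comm]
    using key

/-- Monotonicity of the regularized `p`-Laplacian flux in the Frobenius inner product: for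
`p ≥ 2` and `ε > 0`, the map `X ↦ (ε² + ‖X‖_F²)^{p/2−1} · X` is monotone on `n × n` real
matrices. -/
theorem stmt17 {n : ℕ}
    (A : Matrix (Fin n) (Fin n) ℝ) (hA : A.IsSymm) (hA' : A.PosSemidef)
    (ε : ℝ) (hε : 0 < ε) (p : ℝ) (hp : 2 ≤ p) :
    ∀ X Y : Matrix (Fin n) (Fin n) ℝ,
      0 ≤ ∑ i : Fin n, ∑ j : Fin n,
        ((ε ^ 2 + ∑ k : Fin n, ∑ l : Fin n, (X k l) ^ 2) ^ (p / 2 - 1) * X i j -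
            (ε ^ 2 + ∑ k : Fin n, ∑ l : Fin n, (Y k l) ^ 2) ^ (p / 2 - 1) * Y i j) *
          (X i j - Y i j) :=
  stmt17_general ε p hp
end
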